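/- arXiv:2011.06247 — 2 statements merged into one kernel-verified Lean document; each statement's English description precedes it below -/
import Mathlib

section
/- Largest player lemma: in the single-enterprise collateral minimization problem with integer input {n, {x_i}_{i=1}^n, Z, α}, if α > Z, then in every optimal solution at least one of the players with the largest investment opportunity (a player i with x_i = max_j x_j) receives a zero collateral. -/
open scoped BigOperators Classical

/-- The single-enterprise (star) model: one enterprise with operational cost
`Z ≥ 0` and interest rate `α > 0`, and `n` potential investors, where investor
`i` may invest the amount `x i > 0`.  The enterprise is profitable:
`(1 + α) * (∑ x - Z) ≥ ∑ x`. -/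
structure StarGame (n : ℕ) where
  x : Fin n → ℝ
  Z : ℝ
  α : ℝ
  x_pos : ∀ i, 0 < x i
  Z_nonneg : 0 ≤ Z
  α_pos : 0 < α
  profitable : (∑ i, x i) ≤ (1 + α) * ((∑ i, x i) - Z)

namespace StarGame

variable {n : ℕ}

/-- The enterprise return to a cooperating investor `i` when `S` is the set of
cooperators: `R_i = max (0, (1+α)(∑_{j∈S} x_j − Z) · x_i / ∑_{j∈S} x_j)`
(in particular it is `0` if the enterprise defaults,
i.e. if `∑_{j∈S} x_j < Z`). -/
noncomputable def ret (G : StarGame n) (S : Finset (Fin n)) (i : Fin n) : ℝ :=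
  max 0 ((1 + G.α) * ((∑ j ∈ S, G.x j) - G.Z) * (G.x i / ∑ j ∈ S, G.x j))

/-- The utility of a cooperating investor `i` with collateral `c i` when the
set of cooperators is `S` (the collateral is realized when the return falls
below the invested amount). -/
noncomputable def coopUtil (G : StarGame n) (c : Fin n → ℝ) (S : Finset (Fin n))
    (i : Fin n) : ℝ :=
  if G.ret S i ≤ G.x i - c i then c i + G.ret S i
  else if G.ret S i ≤ G.x i then G.x i
  else G.ret S i

/-- The utility of investor `i` under the profile with cooperator set `S`. -/
noncomputable def utility (G : StarGame n) (c : Fin n → ℝ) (S : Finset (Fin n))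
    (i : Fin n) : ℝ :=
  if i ∈ S then G.coopUtil c S i else G.x i

/-- `S` is a Nash equilibrium of the game induced by the collateral vector `c`,
with ties broken towards cooperating: every cooperator weakly prefers
cooperating, and every defector strictly prefers defecting. -/
def NashEq (G : StarGame n) (c : Fin n → ℝ) (S : Finset (Fin n)) : Prop :=
  (∀ i ∈ S, G.x i ≤ G.coopUtil c S i) ∧
    ∀ i ∉ S, G.coopUtil c (insert i S) i < G.x i

/-- A viable collateral vector: nonnegative collaterals for which all-cooperate
is the unique Nash equilibrium of the induced game. -/
def Viable (G : StarGame n) (c : Fin n → ℝ) : Prop :=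
  (∀ i, 0 ≤ c i) ∧ G.NashEq c Finset.univ ∧ ∀ S, G.NashEq c S → S = Finset.univ

/-- The total collateral of a collateral vector. -/
noncomputable def total (c : Fin n → ℝ) : ℝ := ∑ i, c i

/-- An optimal solution of the single-enterprise collateral minimization
problem: a viable collateral vector of minimum total collateral. -/
def Optimal (G : StarGame n) (c : Fin n → ℝ) : Prop :=
  G.Viable c ∧ ∀ c', G.Viable c' → total c ≤ total c'

/-- A minimal collateral vector: viable, and decreasing any single entry by any
`ε > 0` destroys viability. -/
def Minimal (G : StarGame n) (c : Fin n → ℝ) : Prop :=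
  G.Viable c ∧ ∀ (i : Fin n) (ε : ℝ), 0 < ε → ¬ G.Viable (Function.update c i (c i - ε))

/-- The permutation `σ` (listing the players in the order
`σ 1, σ 2, …, σ n`) is an order of iterated elimination of strictly dominated
strategies for the collateral vector `c`, leading to all-cooperate: at every
position `t`, given that the players at earlier positions cooperate, player
`σ t` strictly prefers to cooperate (ties broken towards cooperating) whatever
the remaining players do. -/
def ElimOrder (G : StarGame n) (c : Fin n → ℝ) (σ : Equiv.Perm (Fin n)) : Prop :=
  ∀ (t : Fin n) (S : Finset (Fin n)), (∀ s, s < t → σ s ∈ S) →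
    G.x (σ t) ≤ G.coopUtil c (insert (σ t) S) (σ t)

end StarGame

set_option linter.unusedVariables false

namespace StarGame

variable {n : ℕ}

theorem ret_nonneg' (G : StarGame n) (S : Finset (Fin n)) (i : Fin n) : 0 ≤ G.ret S i :=
  le_max_left _ _

theorem sumx_nonneg (G : StarGame n) (S : Finset (Fin n)) : 0 ≤ ∑ j ∈ S, G.x j :=
  Finset.sum_nonneg fun j _ => (G.x_pos j).le

theorem ret_zero (G : StarGame n) {S : Finset (Fin n)} (h : ∑ j ∈ S, G.x j ≤ G.Z)
    (i : Fin n) : G.ret S i = 0 := by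
  refine max_eq_left ?_
  have h2 : 0 ≤ G.x i / ∑ j ∈ S, G.x j := div_nonneg (G.x_pos i).le (G.sumx_nonneg S)
  have h1 : (1 + G.α) * ((∑ j ∈ S, G.x j) - G.Z) ≤ 0 := by
    nlinarith [G.α_pos, mul_nonneg (by linarith [G.α_pos] : (0:ℝ) ≤ 1 + G.α)
      (by linarith : (0:ℝ) ≤ G.Z - ∑ j ∈ S, G.x j)]
  exact mul_nonpos_iff.mpr (Or.inr ⟨h1, h2⟩)

theorem ret_ge (G : StarGame n)
    (hxint : ∀ i, ∃ m : ℤ, G.x i = (m : ℝ))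
    (hZint : ∃ m : ℤ, G.Z = (m : ℝ)) (hαint : ∃ m : ℤ, G.α = (m : ℝ))
    (hZα : G.Z < G.α) {S : Finset (Fin n)} {i : Fin n}
    (h : G.Z < ∑ j ∈ S, G.x j) : G.x i ≤ G.ret S i := by
  obtain ⟨mz, hmz⟩ := hZint
  obtain ⟨ma, hma⟩ := hαint
  obtain ⟨ms, hms⟩ : ∃ m : ℤ, ∑ j ∈ S, G.x j = (m : ℝ) := by
    refine ⟨∑ j ∈ S, (hxint j).choose, ?_⟩
    push_cast
    exact Finset.sum_congr rfl fun j _ => (hxint j).choose_spec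
  have h1 : G.Z + 1 ≤ ∑ j ∈ S, G.x j := by
    rw [hms, hmz] at h ⊢
    exact_mod_cast Int.add_one_le_iff.mpr (by exact_mod_cast h)
  have h2 : G.Z + 1 ≤ G.α := by
    rw [hmz, hma] at hZα ⊢
    exact_mod_cast Int.add_one_le_iff.mpr (by exact_mod_cast hZα)
  have hσpos : (0:ℝ) < ∑ j ∈ S, G.x j := by linarith [G.Z_nonneg]
  have key : (∑ j ∈ S, G.x j) ≤ (1 + G.α) * ((∑ j ∈ S, G.x j) - G.Z) := by
    nlinarith [mul_le_mul_of_nonneg_left h1 G.α_pos.le, G.Z_nonneg]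
  have h3 : (∑ j ∈ S, G.x j) * (G.x i / ∑ j ∈ S, G.x j)
      ≤ (1 + G.α) * ((∑ j ∈ S, G.x j) - G.Z) * (G.x i / ∑ j ∈ S, G.x j) :=
    mul_le_mul_of_nonneg_right key (div_nonneg (G.x_pos i).le hσpos.le)
  have h4 : (∑ j ∈ S, G.x j) * (G.x i / ∑ j ∈ S, G.x j) = G.x i := by
    field_simp
  rw [h4] at h3
  exact h3.trans (le_max_right _ _)

theorem coopUtil_iff (G : StarGame n) (c : Fin n → ℝ) (S : Finset (Fin n)) {i : Fin n}
    (hc : 0 ≤ c i) : G.x i ≤ G.coopUtil c S i ↔ G.x i - c i ≤ G.ret S i := by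
  unfold coopUtil
  split_ifs with h1 h2
  · constructor <;> intro h <;> linarith
  · push_neg at h1
    constructor <;> intro h <;> linarith
  · push_neg at h1 h2
    constructor <;> intro h <;> linarith

theorem coopUtil_lt_iff (G : StarGame n) (c : Fin n → ℝ) (S : Finset (Fin n)) {i : Fin n}
    (hc : 0 ≤ c i) : G.coopUtil c S i < G.x i ↔ G.ret S i < G.x i - c i := by
  rw [← not_le, ← not_le]
  exact not_congr (G.coopUtil_iff c S hc)

theorem univ_sum_gt (G : StarGame n) (hn : 0 < n) : G.Z < ∑ j, G.x j := by
  have hpos : 0 < ∑ j, G.x j :=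
    Finset.sum_pos (fun j _ => G.x_pos j) ⟨⟨0, hn⟩, Finset.mem_univ _⟩
  by_contra hcon
  push_neg at hcon
  have hp := G.profitable
  nlinarith [G.α_pos, mul_nonneg (by linarith [G.α_pos] : (0:ℝ) ≤ 1 + G.α)
    (by linarith : (0:ℝ) ≤ G.Z - ∑ j, G.x j)]

theorem nash_univ (G : StarGame n)
    (hxint : ∀ i, ∃ m : ℤ, G.x i = (m : ℝ))
    (hZint : ∃ m : ℤ, G.Z = (m : ℝ)) (hαint : ∃ m : ℤ, G.α = (m : ℝ))
    (hZα : G.Z < G.α) (hn : 0 < n) (c : Fin n → ℝ) (hc : ∀ i, 0 ≤ c i) :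
    G.NashEq c Finset.univ := by
  refine ⟨fun i _ => ?_, fun i hi => absurd (Finset.mem_univ i) hi⟩
  rw [G.coopUtil_iff c _ (hc i)]
  have := G.ret_ge hxint hZint hαint hZα (S := Finset.univ) (i := i) (G.univ_sum_gt hn)
  linarith [hc i]

theorem indicator_viable (G : StarGame n)
    (hxint : ∀ i, ∃ m : ℤ, G.x i = (m : ℝ))
    (hZint : ∃ m : ℤ, G.Z = (m : ℝ)) (hαint : ∃ m : ℤ, G.α = (m : ℝ))
    (hZα : G.Z < G.α) (hn : 0 < n)
    {B : Finset (Fin n)} {v : Fin n} (hv : v ∉ B)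
    (hw : G.Z < (∑ j ∈ B, G.x j) + G.x v) :
    G.Viable (fun j => if j ∈ B then G.x j else 0) := by
  classical
  set cB : Fin n → ℝ := fun j => if j ∈ B then G.x j else 0 with hcB
  have hc0 : ∀ i, 0 ≤ cB i := by
    intro i
    simp only [hcB]
    split_ifs with h
    · exact (G.x_pos i).le
    · exact le_refl 0
  refine ⟨hc0, G.nash_univ hxint hZint hαint hZα hn cB hc0, ?_⟩
  intro S hS
  by_contra hSne
  obtain ⟨d, hd⟩ : ∃ d, d ∉ S := by
    by_contra hh
    push_neg at hh
    exact hSne (Finset.eq_univ_iff_forall.mpr hh)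
  have hd1 : G.ret (insert d S) d < G.x d - cB d :=
    (G.coopUtil_lt_iff cB _ (hc0 d)).mp (hS.2 d hd)
  have hdB : d ∉ B := by
    intro hdB
    have hcd : cB d = G.x d := by simp [hcB, hdB]
    linarith [G.ret_nonneg' (insert d S) d]
  have hcBd : cB d = 0 := by simp [hcB, hdB]
  have hdS : ∑ j ∈ insert d S, G.x j ≤ G.Z := by
    by_contra hh
    push_neg at hh
    have := G.ret_ge hxint hZint hαint hZα (i := d) hh
    linarith [hc0 d]
  rw [Finset.sum_insert hd] at hdS
  have hSZ : ∑ j ∈ S, G.x j ≤ G.Z := by linarith [G.x_pos d]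
  have hSB : S = B := by
    apply Finset.Subset.antisymm
    · intro j hj
      have h1 := (G.coopUtil_iff cB S (hc0 j)).mp (hS.1 j hj)
      rw [G.ret_zero hSZ j] at h1
      by_contra hjB
      have : cB j = 0 := by simp [hcB, hjB]
      linarith [G.x_pos j]
    · intro j hjB
      by_contra hjS
      have h1 := (G.coopUtil_lt_iff cB _ (hc0 j)).mp (hS.2 j hjS)
      have : cB j = G.x j := by simp [hcB, hjB]
      linarith [G.ret_nonneg' (insert j S) j]
  subst hSB
  have h1 := (G.coopUtil_lt_iff cB _ (hc0 v)).mp (hS.2 v hv)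
  have h2 : G.Z < ∑ j ∈ insert v S, G.x j := by
    rw [Finset.sum_insert hv]
    linarith
  have := G.ret_ge hxint hZint hαint hZα (i := v) h2
  linarith [hc0 v]

end StarGame

/-- **Largest player (Lemma 5).**  In the single-enterprise collateral
minimization problem with integer input, if `α > Z`, then in every optimal
solution at least one of the players with the largest investment opportunity
receives a zero collateral. -/
theorem largest_player_zero_collateral {n : ℕ} (G : StarGame n) (hn : 0 < n)
    (hxint : ∀ i, ∃ m : ℤ, G.x i = (m : ℝ))
    (hZint : ∃ m : ℤ, G.Z = (m : ℝ))
    (hαint : ∃ m : ℤ, G.α = (m : ℝ))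
    (hZα : G.Z < G.α)
    (c : Fin n → ℝ) (hopt : G.Optimal c) :
    ∃ i : Fin n, (∀ j, G.x j ≤ G.x i) ∧ c i = 0 := by
  classical
  obtain ⟨⟨hc0, hNEuniv, huniq⟩, hmin⟩ := hopt
  set A : Finset (Fin n) := Finset.univ.filter (fun j => G.x j ≤ c j) with hA
  have hmemA : ∀ j, j ∈ A ↔ G.x j ≤ c j := by
    intro j
    simp [hA]
  have htc : StarGame.total c = ∑ j, c j := rfl
  have hsum_indicator : ∀ B : Finset (Fin n),
      StarGame.total (fun j => if j ∈ B then G.x j else 0) = ∑ j ∈ B, G.x j := by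
    intro B
    rw [StarGame.total, Finset.sum_ite_mem, Finset.univ_inter]
  have hwitness : A ≠ Finset.univ → ∃ w, w ∉ A ∧ G.Z < (∑ j ∈ A, G.x j) + G.x w := by
    intro hAne
    have hnot : ¬ G.NashEq c A := fun h => hAne (huniq A h)
    unfold StarGame.NashEq at hnot
    push_neg at hnot
    have hmem : ∀ i ∈ A, G.x i ≤ G.coopUtil c A i := by
      intro i hi
      rw [G.coopUtil_iff c A (hc0 i)]
      have := (hmemA i).mp hi
      linarith [G.ret_nonneg' A i]
    obtain ⟨w, hwA, hw⟩ := hnot hmem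
    rw [G.coopUtil_iff c _ (hc0 w)] at hw
    have hcw : c w < G.x w := by
      by_contra hh
      push_neg at hh
      exact hwA ((hmemA w).mpr hh)
    refine ⟨w, hwA, ?_⟩
    by_contra hh
    push_neg at hh
    have hz : (∑ j ∈ insert w A, G.x j) ≤ G.Z := by
      rw [Finset.sum_insert hwA]
      linarith
    rw [G.ret_zero hz w] at hw
    linarith
  have htotal_ge : ∀ j', j' ∉ A → (∑ j ∈ A, G.x j) + c j' ≤ StarGame.total c := by
    intro j' hj'
    have h1 : ∑ j ∈ insert j' A, c j ≤ ∑ j, c j := by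
      apply Finset.sum_le_sum_of_subset_of_nonneg (Finset.subset_univ _)
      intro k _ _
      exact hc0 k
    rw [Finset.sum_insert hj'] at h1
    have h2 : ∑ j ∈ A, G.x j ≤ ∑ j ∈ A, c j :=
      Finset.sum_le_sum fun j hj => (hmemA j).mp hj
    rw [htc]
    linarith
  obtain ⟨imax, -, himax⟩ := Finset.exists_max_image Finset.univ G.x ⟨⟨0, hn⟩, Finset.mem_univ _⟩
  have claim1 : ∃ j', (∀ k, G.x k ≤ G.x j') ∧ c j' < G.x j' := by
    by_contra hcon
    push_neg at hcon
    have hi0A : imax ∈ A := (hmemA imax).mpr (hcon imax fun k => himax k (Finset.mem_univ k))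
    by_cases hAuniv : A = Finset.univ
    · have hv : imax ∉ Finset.univ.erase imax := Finset.notMem_erase _ _
      have hw : G.Z < (∑ j ∈ Finset.univ.erase imax, G.x j) + G.x imax := by
        rw [Finset.sum_erase_add _ _ (Finset.mem_univ imax)]
        exact G.univ_sum_gt hn
      have hle := hmin _ (G.indicator_viable hxint hZint hαint hZα hn hv hw)
      rw [hsum_indicator] at hle
      have h2 : ∑ j, G.x j ≤ StarGame.total c := by
        rw [htc]
        apply Finset.sum_le_sum
        intro j _
        exact (hmemA j).mp (by rw [hAuniv]; exact Finset.mem_univ j)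
      have h3 : (∑ j ∈ Finset.univ.erase imax, G.x j) + G.x imax = ∑ j, G.x j :=
        Finset.sum_erase_add _ _ (Finset.mem_univ imax)
      linarith [G.x_pos imax]
    · obtain ⟨w, hwA, hw⟩ := hwitness hAuniv
      obtain ⟨k, hk⟩ : ∃ k, G.x w < G.x k := by
        by_contra hh
        push_neg at hh
        exact hwA ((hmemA w).mpr (hcon w hh))
      have hwlt : G.x w < G.x imax := lt_of_lt_of_le hk (himax k (Finset.mem_univ k))
      have hne : imax ≠ w := by
        intro h
        rw [h] at hwlt
        exact lt_irrefl _ hwlt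
      have hwB : w ∉ A.erase imax := fun h => hwA (Finset.mem_of_mem_erase h)
      have hvB : imax ∉ insert w (A.erase imax) := by
        simp [hne, Finset.notMem_erase]
      have hsumB : ∑ j ∈ insert w (A.erase imax), G.x j
          = G.x w + ((∑ j ∈ A, G.x j) - G.x imax) := by
        rw [Finset.sum_insert hwB, Finset.sum_erase_eq_sub hi0A]
      have hwit2 : G.Z < (∑ j ∈ insert w (A.erase imax), G.x j) + G.x imax := by
        rw [hsumB]
        linarith
      have hle := hmin _ (G.indicator_viable hxint hZint hαint hZα hn hvB hwit2)
      rw [hsum_indicator] at hle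
      have hge := htotal_ge w hwA
      linarith [hc0 w, hwlt]
  obtain ⟨j', hj'max, hj'c⟩ := claim1
  have hj'A : j' ∉ A := fun h => absurd ((hmemA j').mp h) (not_le.mpr hj'c)
  have hAne : A ≠ Finset.univ := fun h => hj'A (by rw [h]; exact Finset.mem_univ j')
  obtain ⟨w, hwA, hw⟩ := hwitness hAne
  have hle := hmin _ (G.indicator_viable hxint hZint hαint hZα hn hwA hw)
  rw [hsum_indicator] at hle
  have hge := htotal_ge j' hj'A
  exact ⟨j', hj'max, le_antisymm (by linarith) (hc0 j')⟩
end

section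
/- Optimal collaterals in DAGs: consider the collateral minimization problem P_G with investment graph G = (V,E). If G is acyclic, then a solution to P_G is obtained by solving, for each star sub-graph H_i in the star decomposition ℋ(G), the single-enterprise collateral minimization problem P_{H_i} induced on H_i separately, and combining these collaterals; the combined collateral matrix is viable for P_G (with iterated elimination processing enterprises in reverse topological order, and within each enterprise in the order of its star solution). Consequently the optimal total collateral satisfies C_G = Σ_{H_i ∈ ℋ(G)} C_{H_i}, and the Network Excess Collaterals satisfy NEC(P_G) = 1. -/
open scoped BigOperators Classical

/-- A network investment game on `n` firms.  `x k i` is the amount that firm `i`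
can invest in the enterprise of firm `k` (`x k i = 0` means that there is no
edge `(k,i)`), `Z k` is the operational cost of the enterprise of `k` and
`α k` is its interest rate.  As in the paper, `Z k = 0` (w.l.o.g.) for
non-enterprise vertices and `α k > 0` for enterprise vertices. -/
structure InvestmentNetwork (n : ℕ) where
  x : Fin n → Fin n → ℝ
  Z : Fin n → ℝ
  α : Fin n → ℝ
  x_nonneg : ∀ k i, 0 ≤ x k i
  Z_nonneg : ∀ k, 0 ≤ Z k
  α_pos : ∀ k, (∃ i, 0 < x k i) → 0 < α k
  Z_spike : ∀ k, (∀ i, x k i = 0) → Z k = 0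

namespace InvestmentNetwork

variable {n : ℕ}

/-- `k` is an enterprise vertex: it has at least one potential investor. -/
def IsEnterprise (N : InvestmentNetwork n) (k : Fin n) : Prop :=
  ∃ i, 0 < N.x k i

/-- The set of edges `(k,i)` of the investment graph: `i` has an investment
opportunity in the enterprise of `k`. -/
noncomputable def edges (N : InvestmentNetwork n) : Finset (Fin n × Fin n) :=
  Finset.univ.filter (fun e => 0 < N.x e.1 e.2)

/-- A strategy profile is identified with its set of cooperate edges. -/
def IsProfile (N : InvestmentNetwork n) (C : Finset (Fin n × Fin n)) : Prop :=
  C ⊆ N.edges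

/-- The total capital raised by enterprise `k` when `I` is a set of invest edges. -/
noncomputable def raised (N : InvestmentNetwork n) (I : Finset (Fin n × Fin n)) (k : Fin n) : ℝ :=
  ∑ i : Fin n, if (k, i) ∈ I then N.x k i else 0

/-- `I` is a consistent set of invest edges within the cooperate edges `C`: the
investor of every edge of `I` is not in default when the invest edges are `I`. -/
def Consistent (N : InvestmentNetwork n) (C I : Finset (Fin n × Fin n)) : Prop :=
  I ⊆ C ∧ ∀ e ∈ I, N.Z e.2 ≤ N.raised I e.2

/-- The set of invest edges determined from the cooperate edges `C` by the
default-determination process (the greatest consistent subset of `C`,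
i.e. the result of iteratively deleting the investments of defaulting firms). -/
noncomputable def investSet (N : InvestmentNetwork n) (C : Finset (Fin n × Fin n)) :
    Finset (Fin n × Fin n) :=
  C.filter (fun e => ∃ I, N.Consistent C I ∧ e ∈ I)

/-- Firm `k` is in default under the cooperate edges `C`. -/
def Defaults (N : InvestmentNetwork n) (C : Finset (Fin n × Fin n)) (k : Fin n) : Prop :=
  N.raised (N.investSet C) k < N.Z k

/-- The enterprise return `R_{ki}` to investor `i` in enterprise `k` when the
set of invest edges is `I`. -/
noncomputable def ret (N : InvestmentNetwork n) (I : Finset (Fin n × Fin n)) (k i : Fin n) : ℝ :=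
  max 0 ((1 + N.α k) * (N.raised I k - N.Z k) * (N.x k i / N.raised I k))

/-- The utility of firm `i` from the edge `(k,i)` under cooperate edges `C` and
collateral matrix `c`: `x k i` if `i` defects, `0` if `i` cooperates but is in
default, and otherwise the return adjusted by the collateral. -/
noncomputable def edgeUtility (N : InvestmentNetwork n) (c : Fin n → Fin n → ℝ)
    (C : Finset (Fin n × Fin n)) (k i : Fin n) : ℝ :=
  if (k, i) ∉ C then N.x k i
  else if (k, i) ∉ N.investSet C then 0
  else if N.ret (N.investSet C) k i ≤ N.x k i - c k i then c k i + N.ret (N.investSet C) k i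
  else if N.ret (N.investSet C) k i ≤ N.x k i then N.x k i
  else N.ret (N.investSet C) k i

/-- Total utility of firm `i`: the sum of her utilities over all her
investment opportunities. -/
noncomputable def utility (N : InvestmentNetwork n) (c : Fin n → Fin n → ℝ)
    (C : Finset (Fin n × Fin n)) (i : Fin n) : ℝ :=
  ∑ k : Fin n, if (k, i) ∈ N.edges then N.edgeUtility c C k i else 0

/-- The number of investment opportunities in which `i` cooperates. -/
noncomputable def coopCount (C : Finset (Fin n × Fin n)) (i : Fin n) : ℕ :=
  (C.filter (fun e => e.2 = i)).card

/-- `c` is a collateral matrix: nonnegative and supported on the edges. -/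
def IsCollateral (N : InvestmentNetwork n) (c : Fin n → Fin n → ℝ) : Prop :=
  ∀ k i, 0 ≤ c k i ∧ (N.x k i = 0 → c k i = 0)

/-- `C'` is obtained from `C` by changing only decisions of player `i`. -/
def Deviation (C C' : Finset (Fin n × Fin n)) (i : Fin n) : Prop :=
  ∀ e : Fin n × Fin n, e.2 ≠ i → (e ∈ C ↔ e ∈ C')

/-- Nash equilibrium of the game induced by the collateral matrix `c`, with
ties broken towards investing: this is formalized by comparing utilities
lexicographically, an infinitesimal bonus being given for each cooperation. -/
def NashEq (N : InvestmentNetwork n) (c : Fin n → Fin n → ℝ)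
    (C : Finset (Fin n × Fin n)) : Prop :=
  N.IsProfile C ∧
    ∀ (i : Fin n) (C' : Finset (Fin n × Fin n)), N.IsProfile C' → Deviation C C' i →
      N.utility c C' i < N.utility c C i ∨
        (N.utility c C' i = N.utility c C i ∧ coopCount C' i ≤ coopCount C i)

/-- A viable collateral matrix: all-cooperate is the unique Nash equilibrium of
the induced game. -/
def Viable (N : InvestmentNetwork n) (c : Fin n → Fin n → ℝ) : Prop :=
  N.IsCollateral c ∧ N.NashEq c N.edges ∧ ∀ C, N.NashEq c C → C = N.edges

/-- The total collateral of a collateral matrix. -/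
noncomputable def total (c : Fin n → Fin n → ℝ) : ℝ :=
  ∑ k : Fin n, ∑ i : Fin n, c k i

/-- An optimal solution of the collateral minimization problem: a viable
collateral matrix of minimum total collateral. -/
def Optimal (N : InvestmentNetwork n) (c : Fin n → Fin n → ℝ) : Prop :=
  N.Viable c ∧ ∀ c', N.Viable c' → total c ≤ total c'

/-- All enterprises are (potentially) profitable:
`(1 + α k) * (X k - Z k) ≥ X k` where `X k = ∑ i, x k i`. -/
def Profitable (N : InvestmentNetwork n) : Prop :=
  ∀ k, N.IsEnterprise k → (∑ i, N.x k i) ≤ (1 + N.α k) * ((∑ i, N.x k i) - N.Z k)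

/-- Player `i` strictly prefers (ties being broken towards investing) to
cooperate rather than to defect w.r.t. enterprise `k`, when the cooperate
edges of the other decisions are those of `C`. -/
def StrictlyPrefersCoop (N : InvestmentNetwork n) (c : Fin n → Fin n → ℝ)
    (C : Finset (Fin n × Fin n)) (k i : Fin n) : Prop :=
  N.x k i ≤ N.edgeUtility c (insert (k, i) C) k i

/-- `σ` is an order of the edges along which iterated elimination of strictly
dominated strategies leads to the all-cooperate profile: at every step, given
that the previously processed edges cooperate, the player of the next edge
strictly prefers to cooperate whatever the remaining players do. -/
def ElimOrder (N : InvestmentNetwork n) (c : Fin n → Fin n → ℝ)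
    (σ : List (Fin n × Fin n)) : Prop :=
  σ.Nodup ∧ (∀ e, e ∈ σ ↔ e ∈ N.edges) ∧
    ∀ (t : ℕ) (ht : t < σ.length) (C : Finset (Fin n × Fin n)),
      N.IsProfile C → (∀ e ∈ σ.take t, e ∈ C) →
      N.StrictlyPrefersCoop c C (σ.get ⟨t, ht⟩).1 (σ.get ⟨t, ht⟩).2

end InvestmentNetwork

namespace InvestmentNetwork

variable {n : ℕ}

/-- The star sub-graph of the star decomposition associated to the enterprise
vertex `k`: only the investment opportunities into `k` are kept (this is the
single-enterprise collateral minimization problem induced on the star of `k`,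
stated on the same vertex set). -/
noncomputable def starSub (N : InvestmentNetwork n) (k : Fin n) :
    InvestmentNetwork n where
  x := fun j i => if j = k then N.x j i else 0
  Z := fun j => if j = k then N.Z j else 0
  α := N.α
  x_nonneg := by
    intro j i
    try dsimp only
    split_ifs
    · exact N.x_nonneg j i
    · exact le_refl 0
  Z_nonneg := by
    intro j
    try dsimp only
    split_ifs
    · exact N.Z_nonneg j
    · exact le_refl 0
  α_pos := by
    intro j hj
    obtain ⟨i, hi⟩ := hj
    try dsimp only at hi
    split_ifs at hi with h
    · exact N.α_pos j ⟨i, hi⟩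
    · exact absurd hi (lt_irrefl 0)
  Z_spike := by
    intro j hj
    try dsimp only
    split_ifs with h
    · subst h
      refine N.Z_spike j (fun i => ?_)
      have := hj i
      try dsimp only at this
      rwa [if_pos rfl] at this
    · rfl

/-- The restriction of a collateral matrix to the row of the enterprise `k`:
the collaterals that `k` offers its own investors. -/
noncomputable def rowMatrix (k : Fin n) (c : Fin n → Fin n → ℝ) :
    Fin n → Fin n → ℝ :=
  fun j i => if j = k then c j i else 0

/-- `v` is the optimal value of the collateral minimization problem for `N`:
it is the total collateral of some optimal (minimum-total viable) solution. -/
def IsOptTotal (N : InvestmentNetwork n) (v : ℝ) : Prop :=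
  ∃ c, N.Optimal c ∧ total c = v

/-- The investment graph of `N` is acyclic (no directed cycle). -/
def Acyclic (N : InvestmentNetwork n) : Prop :=
  ∀ v : Fin n, ¬ Relation.TransGen (fun a b => 0 < N.x a b) v v

end InvestmentNetwork

/-! Edge utilities only grow when more edges cooperate, so a profile is a Nash equilibrium as soon
as no cooperator gains by leaving one edge and no defector gains by joining one edge. Conversely, a
viable matrix admits no proper sub-profile that deters every single-edge entry: a maximal subset of
it from which nobody wants to exit would be a second equilibrium.

On an acyclic graph, process the enterprises along the investment order: once the investors of an
enterprise `k` cooperate on all their edges they are solvent, and the row of `k` is played exactly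
as in the star game of `k`, so viability of the star solution forces the row of `k` to cooperate
too. Hence the combined matrix is viable. In the other direction, the row of any viable matrix is
viable for its star, so no viable matrix is cheaper, row by row. -/

namespace InvestmentNetwork

variable {n : ℕ} (N : InvestmentNetwork n)

def Loopless : Prop :=
  ∀ e ∈ N.edges, e.1 ≠ e.2

lemma mem_edges {e : Fin n × Fin n} : e ∈ N.edges ↔ 0 < N.x e.1 e.2 := by
  simp [edges]

lemma x_eq_zero_of_notMem_edges {k i : Fin n} (h : (k, i) ∉ N.edges) : N.x k i = 0 :=
  le_antisymm (not_lt.1 fun hx => h (N.mem_edges.2 hx)) (N.x_nonneg k i)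

lemma x_eq_zero_of_not_isEnterprise {k : Fin n} (hk : ¬ N.IsEnterprise k) (i : Fin n) :
    N.x k i = 0 :=
  le_antisymm (not_lt.1 fun hi => hk ⟨i, hi⟩) (N.x_nonneg k i)

lemma sum_x_pos {k : Fin n} (hk : N.IsEnterprise k) : 0 < ∑ i, N.x k i := by
  obtain ⟨i, hi⟩ := hk
  exact hi.trans_le (Finset.single_le_sum (fun j _ => N.x_nonneg k j) (Finset.mem_univ i))

lemma Z_le_sum_x (hprof : N.Profitable) (k : Fin n) : N.Z k ≤ ∑ i, N.x k i := by
  by_cases hk : N.IsEnterprise k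
  · nlinarith [hprof k hk, N.α_pos k hk, N.sum_x_pos hk]
  · rw [N.Z_spike k (N.x_eq_zero_of_not_isEnterprise hk)]
    exact Finset.sum_nonneg fun i _ => N.x_nonneg k i

section Raised

variable {I J : Finset (Fin n × Fin n)} {k : Fin n}

lemma raised_nonneg : 0 ≤ N.raised I k :=
  Finset.sum_nonneg fun i _ => by split_ifs <;> simp [N.x_nonneg]

lemma raised_le_raised (h : ∀ i, (k, i) ∈ I → (k, i) ∈ J) : N.raised I k ≤ N.raised J k :=
  Finset.sum_le_sum fun i _ => by
    by_cases hi : (k, i) ∈ I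
    · simp [hi, h i hi]
    · simp only [hi, if_false]
      split_ifs <;> simp [N.x_nonneg]

lemma raised_mono (h : I ⊆ J) (k : Fin n) : N.raised I k ≤ N.raised J k :=
  N.raised_le_raised fun _ hi => h hi

lemma raised_congr (h : ∀ i, (k, i) ∈ I ↔ (k, i) ∈ J) : N.raised I k = N.raised J k :=
  (N.raised_le_raised fun i => (h i).1).antisymm (N.raised_le_raised fun i => (h i).2)

lemma raised_eq_sum_x (h : ∀ i, (k, i) ∈ N.edges → (k, i) ∈ I) :
    N.raised I k = ∑ i, N.x k i :=
  Finset.sum_congr rfl fun i _ => by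
    by_cases hi : (k, i) ∈ N.edges
    · simp [h i hi]
    · simp [N.x_eq_zero_of_notMem_edges hi]

end Raised

section InvestSet

variable {C D : Finset (Fin n × Fin n)}

lemma investSet_subset (C : Finset (Fin n × Fin n)) : N.investSet C ⊆ C :=
  Finset.filter_subset _ _

lemma subset_investSet {I : Finset (Fin n × Fin n)} (hI : N.Consistent C I) :
    I ⊆ N.investSet C :=
  fun _ he => Finset.mem_filter.2 ⟨hI.1 he, I, hI, he⟩

lemma investSet_mono (h : C ⊆ D) : N.investSet C ⊆ N.investSet D := fun e he => by
  obtain ⟨heC, I, hI, heI⟩ := Finset.mem_filter.1 he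
  exact Finset.mem_filter.2 ⟨h heC, I, ⟨hI.1.trans h, hI.2⟩, heI⟩

lemma not_defaults_of_mem_investSet {e : Fin n × Fin n} (he : e ∈ N.investSet C) :
    ¬ N.Defaults C e.2 := by
  obtain ⟨-, I, hI, heI⟩ := Finset.mem_filter.1 he
  exact not_lt.2 ((hI.2 e heI).trans (N.raised_mono (N.subset_investSet hI) e.2))

lemma mem_investSet_iff {e : Fin n × Fin n} (hne : e.1 ≠ e.2) (he : e ∈ C) :
    e ∈ N.investSet C ↔ ¬ N.Defaults C e.2 := by
  refine ⟨N.not_defaults_of_mem_investSet, fun hsolv => ?_⟩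
  refine N.subset_investSet ⟨Finset.insert_subset he (N.investSet_subset C), ?_⟩
    (Finset.mem_insert_self e _)
  intro f hf
  rcases Finset.mem_insert.1 hf with rfl | hf
  · refine (not_lt.1 hsolv).trans (N.raised_le_raised fun i hi => ?_)
    exact Finset.mem_insert_of_mem hi
  · exact (not_lt.1 (N.not_defaults_of_mem_investSet hf)).trans
      (N.raised_mono (Finset.subset_insert _ _) f.2)

lemma not_defaults_of_edges_subset (hprof : N.Profitable) {j : Fin n}
    (h : ∀ l, (j, l) ∈ N.edges → (j, l) ∈ N.investSet C) : ¬ N.Defaults C j := by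
  rw [Defaults, N.raised_eq_sum_x h, not_lt]
  exact N.Z_le_sum_x hprof j

lemma investSet_edges (hprof : N.Profitable) : N.investSet N.edges = N.edges := by
  refine (N.investSet_subset _).antisymm (N.subset_investSet ⟨subset_rfl, fun e _ => ?_⟩)
  rw [N.raised_eq_sum_x fun _ h => h]
  exact N.Z_le_sum_x hprof e.2

end InvestSet

section Payoff

/-- The return `R_{ki}` as a function of the amount `r` raised by `k`. -/
noncomputable def retAt (k i : Fin n) (r : ℝ) : ℝ :=
  max 0 ((1 + N.α k) * (r - N.Z k) * (N.x k i / r))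

/-- The utility of an invest edge `(k, i)` as a function of the amount `r` raised by `k`. -/
noncomputable def payoffAt (c : Fin n → Fin n → ℝ) (k i : Fin n) (r : ℝ) : ℝ :=
  if N.retAt k i r ≤ N.x k i - c k i then c k i + N.retAt k i r
  else if N.retAt k i r ≤ N.x k i then N.x k i
  else N.retAt k i r

variable {c : Fin n → Fin n → ℝ} {k i : Fin n}

lemma retAt_nonneg (r : ℝ) : 0 ≤ N.retAt k i r :=
  le_max_left _ _

/-- For `r > 0` the return is `(1 + α) (x - Z x / r)`, increasing in `r`. -/
lemma retAt_mono {r₁ r₂ : ℝ} (h₀ : 0 ≤ r₁) (h : r₁ ≤ r₂) : N.retAt k i r₁ ≤ N.retAt k i r₂ := by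
  rcases (N.x_nonneg k i).eq_or_lt with hx | hx
  · simp [retAt, ← hx]
  rcases h₀.eq_or_lt with rfl | h₀
  · simp [retAt]
  have hα : 0 < 1 + N.α k := by linarith [N.α_pos k ⟨i, hx⟩]
  have hform : ∀ r, 0 < r → (1 + N.α k) * (r - N.Z k) * (N.x k i / r)
      = (1 + N.α k) * (N.x k i - N.Z k * (N.x k i / r)) := fun r hr => by
    field_simp
  refine max_le_max le_rfl ?_
  rw [hform r₁ h₀, hform r₂ (h₀.trans_le h)]
  gcongr
  exact N.Z_nonneg k

lemma le_retAt_sum_x (hprof : N.Profitable) (h : (k, i) ∈ N.edges) :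
    N.x k i ≤ N.retAt k i (∑ j, N.x k j) := by
  have hent : N.IsEnterprise k := ⟨i, N.mem_edges.1 h⟩
  have hX := N.sum_x_pos hent
  calc N.x k i = (∑ j, N.x k j) * (N.x k i / ∑ j, N.x k j) := by field_simp
    _ ≤ (1 + N.α k) * ((∑ j, N.x k j) - N.Z k) * (N.x k i / ∑ j, N.x k j) := by
      gcongr
      · exact div_nonneg (N.x_nonneg k i) hX.le
      · exact hprof k hent
    _ ≤ N.retAt k i (∑ j, N.x k j) := le_max_right _ _

lemma payoffAt_nonneg (hc : 0 ≤ c k i) (r : ℝ) : 0 ≤ N.payoffAt c k i r := by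
  have := N.retAt_nonneg (k := k) (i := i) r
  unfold payoffAt
  split_ifs <;> linarith [N.x_nonneg k i]

lemma payoffAt_mono {r₁ r₂ : ℝ} (h₀ : 0 ≤ r₁) (h : r₁ ≤ r₂) :
    N.payoffAt c k i r₁ ≤ N.payoffAt c k i r₂ := by
  have := N.retAt_mono (k := k) (i := i) h₀ h
  have := N.retAt_nonneg (k := k) (i := i) r₁
  unfold payoffAt
  split_ifs <;> linarith

lemma le_payoffAt (hc : 0 ≤ c k i) {r : ℝ} (h : N.x k i ≤ N.retAt k i r) :
    N.x k i ≤ N.payoffAt c k i r := by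
  unfold payoffAt
  split_ifs <;> linarith [hc]

end Payoff

section EdgeUtility

variable {c : Fin n → Fin n → ℝ} {C D : Finset (Fin n × Fin n)} {k i : Fin n}

lemma edgeUtility_of_notMem (h : (k, i) ∉ C) : N.edgeUtility c C k i = N.x k i := by
  simp [edgeUtility, h]

lemma edgeUtility_of_notMem_investSet (h : (k, i) ∈ C) (hI : (k, i) ∉ N.investSet C) :
    N.edgeUtility c C k i = 0 := by
  simp [edgeUtility, h, hI]

lemma edgeUtility_of_mem_investSet (h : (k, i) ∈ N.investSet C) :
    N.edgeUtility c C k i = N.payoffAt c k i (N.raised (N.investSet C) k) := by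
  simp [edgeUtility, payoffAt, retAt, ret, N.investSet_subset C h, h]

lemma edgeUtility_nonneg (hc : 0 ≤ c k i) : 0 ≤ N.edgeUtility c C k i := by
  by_cases hC : (k, i) ∈ C
  · by_cases hI : (k, i) ∈ N.investSet C
    · rw [N.edgeUtility_of_mem_investSet hI]
      exact N.payoffAt_nonneg hc _
    · rw [N.edgeUtility_of_notMem_investSet hC hI]
  · rw [N.edgeUtility_of_notMem hC]
    exact N.x_nonneg k i

lemma edgeUtility_le_payoffAt (hc : 0 ≤ c k i) (h : (k, i) ∈ C) :
    N.edgeUtility c C k i ≤ N.payoffAt c k i (N.raised C k) := by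
  by_cases hI : (k, i) ∈ N.investSet C
  · rw [N.edgeUtility_of_mem_investSet hI]
    exact N.payoffAt_mono N.raised_nonneg (N.raised_mono (N.investSet_subset C) k)
  · rw [N.edgeUtility_of_notMem_investSet h hI]
    exact N.payoffAt_nonneg hc _

lemma edgeUtility_le_of_subset (hc : 0 ≤ c k i) (hCD : C ⊆ D) (h : (k, i) ∈ D → (k, i) ∈ C) :
    N.edgeUtility c C k i ≤ N.edgeUtility c D k i := by
  by_cases hD : (k, i) ∈ D
  · by_cases hI : (k, i) ∈ N.investSet C
    · rw [N.edgeUtility_of_mem_investSet hI,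
        N.edgeUtility_of_mem_investSet (N.investSet_mono hCD hI)]
      exact N.payoffAt_mono N.raised_nonneg (N.raised_mono (N.investSet_mono hCD) k)
    · rw [N.edgeUtility_of_notMem_investSet (h hD) hI]
      exact N.edgeUtility_nonneg hc
  · rw [N.edgeUtility_of_notMem hD, N.edgeUtility_of_notMem fun hC => hD (hCD hC)]

lemma utility_le_utility {c' : Fin n → Fin n → ℝ}
    (h : ∀ k, (k, i) ∈ N.edges → N.edgeUtility c C k i ≤ N.edgeUtility c' D k i) :
    N.utility c C i ≤ N.utility c' D i :=
  Finset.sum_le_sum fun k _ => by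
    split_ifs with hk
    exacts [h k hk, le_rfl]

lemma utility_lt_utility {c' : Fin n → Fin n → ℝ}
    (h : ∀ k, (k, i) ∈ N.edges → N.edgeUtility c C k i ≤ N.edgeUtility c' D k i)
    (hk : (k, i) ∈ N.edges) (hlt : N.edgeUtility c C k i < N.edgeUtility c' D k i) :
    N.utility c C i < N.utility c' D i :=
  Finset.sum_lt_sum (fun k _ => by
      split_ifs with hk
      exacts [h k hk, le_rfl])
    ⟨k, Finset.mem_univ k, by simpa [hk] using hlt⟩

end EdgeUtility

section Equilibrium

/-- No cooperator gains by defecting on a single one of her edges. -/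
def ExitDeterred (c : Fin n → Fin n → ℝ) (S : Finset (Fin n × Fin n)) : Prop :=
  ∀ e ∈ S, N.x e.1 e.2 ≤ N.edgeUtility c S e.1 e.2

/-- No defector gains by cooperating on a single one of her edges. -/
def EntryDeterred (c : Fin n → Fin n → ℝ) (S : Finset (Fin n × Fin n)) : Prop :=
  ∀ e ∈ N.edges, e ∉ S → N.edgeUtility c (insert e S) e.1 e.2 < N.x e.1 e.2

variable {N} {c : Fin n → Fin n → ℝ} {C S T : Finset (Fin n × Fin n)}

lemma coopCount_mono (h : C ⊆ S) (i : Fin n) : coopCount C i ≤ coopCount S i :=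
  Finset.card_le_card (Finset.filter_subset_filter _ h)

lemma coopCount_insert {k i : Fin n} (h : (k, i) ∉ C) :
    coopCount (insert (k, i) C) i = coopCount C i + 1 := by
  rw [coopCount, Finset.filter_insert, if_pos rfl,
    Finset.card_insert_of_notMem fun hm => h (Finset.filter_subset _ _ hm), coopCount]

lemma deviation_insert (C : Finset (Fin n × Fin n)) (k i : Fin n) :
    Deviation C (insert (k, i) C) i := fun e he => by
  rw [Finset.mem_insert, iff_or_self]
  rintro rfl
  exact absurd rfl he

lemma deviation_filter (C : Finset (Fin n × Fin n)) (i : Fin n) :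
    Deviation C (C.filter (·.2 ≠ i)) i := fun e he => by
  simp [he]

lemma NashEq.entryDeterred (hc : N.IsCollateral c) (h : N.NashEq c C) : N.EntryDeterred c C := by
  rintro ⟨k, i⟩ he hC
  by_contra! hge
  have hle : N.utility c C i ≤ N.utility c (insert (k, i) C) i := by
    refine N.utility_le_utility fun k' _ => ?_
    by_cases hk : k' = k
    · subst hk
      rwa [N.edgeUtility_of_notMem hC]
    · refine N.edgeUtility_le_of_subset (hc k' i).1 (Finset.subset_insert _ _) fun hm => ?_
      simpa [hk] using hm
  rcases h.2 i _ (Finset.insert_subset he h.1) (deviation_insert C k i) with hlt | ⟨-, hcount⟩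
  · linarith
  · rw [coopCount_insert hC] at hcount
    omega

/-- A defaulting firm would rather defect on all her edges. -/
lemma NashEq.investSet_eq (hloop : N.Loopless) (h : N.NashEq c C) :
    N.investSet C = C := by
  refine (N.investSet_subset C).antisymm fun e he => ?_
  by_contra hI
  obtain ⟨k, j⟩ := e
  have hdef : N.Defaults C j := by
    by_contra hj
    exact hI ((N.mem_investSet_iff (hloop _ (h.1 he)) he).2 hj)
  have hlt : N.utility c C j < N.utility c (C.filter (·.2 ≠ j)) j := by
    have hout : ∀ k', (k', j) ∉ C.filter (·.2 ≠ j) := by simp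
    refine N.utility_lt_utility (fun k' _ => ?_) (h.1 he) ?_
    · rw [N.edgeUtility_of_notMem (hout k')]
      by_cases hk' : (k', j) ∈ C
      · rw [N.edgeUtility_of_notMem_investSet hk'
          fun hI' => N.not_defaults_of_mem_investSet hI' hdef]
        exact N.x_nonneg k' j
      · rw [N.edgeUtility_of_notMem hk']
    · rw [N.edgeUtility_of_notMem (hout k), N.edgeUtility_of_notMem_investSet he hI]
      exact N.mem_edges.1 (h.1 he)
  rcases h.2 j _ ((Finset.filter_subset _ _).trans h.1) (deviation_filter C j) with
    h' | ⟨h', -⟩ <;> linarith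

lemma investSet_eq_self_of_exitDeterred (hS : S ⊆ N.edges) (h : N.ExitDeterred c S) :
    N.investSet S = S := by
  refine (N.investSet_subset S).antisymm fun e he => ?_
  by_contra hI
  have := h e he
  rw [N.edgeUtility_of_notMem_investSet he hI] at this
  exact (N.mem_edges.1 (hS he)).not_ge this

/-- As `S` is fully invested, `j` is at least as solvent in `S` as in `C`; so `insert (k, j) S`
is fully invested and raises at least as much for `k` as `C` does. -/
lemma edgeUtility_le_edgeUtility_insert_of_deviation (hloop : N.Loopless)
    {k j : Fin n} (hc : 0 ≤ c k j) (hS : N.investSet S = S) (hC : C ⊆ N.edges)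
    (hdev : Deviation S C j) (hkj : (k, j) ∈ C) :
    N.edgeUtility c C k j ≤ N.edgeUtility c (insert (k, j) S) k j := by
  by_cases hI : (k, j) ∈ N.investSet C
  swap
  · rw [N.edgeUtility_of_notMem_investSet hkj hI]
    exact N.edgeUtility_nonneg hc
  have hrow : ∀ l, (k, l) ∈ C → (k, l) ∈ insert (k, j) S := fun l hl => by
    by_cases hlj : l = j
    · simp [hlj]
    · exact Finset.mem_insert_of_mem ((hdev (k, l) hlj).2 hl)
  have hsolv : ¬ N.Defaults (insert (k, j) S) j := by
    refine not_lt.2 ((not_lt.1 (N.not_defaults_of_mem_investSet hI)).trans ?_)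
    calc N.raised (N.investSet C) j ≤ N.raised C j := N.raised_mono (N.investSet_subset C) j
      _ ≤ N.raised S j := N.raised_le_raised fun l hl => by
          by_cases hlj : l = j
          · exact absurd (hlj ▸ rfl) (hloop _ (hC hl))
          · exact (hdev (j, l) hlj).2 hl
      _ = N.raised (N.investSet S) j := by rw [hS]
      _ ≤ N.raised (N.investSet (insert (k, j) S)) j :=
          N.raised_mono (N.investSet_mono (Finset.subset_insert _ _)) j
  have hIS : N.investSet (insert (k, j) S) = insert (k, j) S := by
    refine (N.investSet_subset _).antisymm (Finset.insert_subset ?_ ?_)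
    · exact (N.mem_investSet_iff (hloop _ (hC hkj)) (Finset.mem_insert_self _ _)).2 hsolv
    · exact fun e he => N.investSet_mono (Finset.subset_insert _ _) (hS.symm ▸ he)
  have hkj' : (k, j) ∈ N.investSet (insert (k, j) S) := by
    rw [hIS]
    exact Finset.mem_insert_self _ _
  rw [N.edgeUtility_of_mem_investSet hI, N.edgeUtility_of_mem_investSet hkj', hIS]
  refine N.payoffAt_mono N.raised_nonneg ((N.raised_mono (N.investSet_subset C) k).trans ?_)
  exact N.raised_le_raised hrow

lemma nashEq_of_deterred (hc : N.IsCollateral c) (hloop : N.Loopless)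
    (hS : S ⊆ N.edges) (hexit : N.ExitDeterred c S) (hentry : N.EntryDeterred c S) :
    N.NashEq c S := by
  have hinv := N.investSet_eq_self_of_exitDeterred hS hexit
  refine ⟨hS, fun j C hC hdev => ?_⟩
  have hjoin : ∀ k, (k, j) ∈ C → N.edgeUtility c C k j ≤ N.edgeUtility c (insert (k, j) S) k j :=
    fun k hk => N.edgeUtility_le_edgeUtility_insert_of_deviation hloop (hc k j).1 hinv hC hdev hk
  have hnew : ∀ k, (k, j) ∈ C → (k, j) ∉ S → N.edgeUtility c C k j < N.edgeUtility c S k j :=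
    fun k hCk hSk => by
      rw [N.edgeUtility_of_notMem hSk]
      exact (hjoin k hCk).trans_lt (hentry _ (hC hCk) hSk)
  have hle : ∀ k, (k, j) ∈ N.edges → N.edgeUtility c C k j ≤ N.edgeUtility c S k j := by
    intro k _
    by_cases hCk : (k, j) ∈ C <;> by_cases hSk : (k, j) ∈ S
    · simpa [Finset.insert_eq_of_mem hSk] using hjoin k hCk
    · exact (hnew k hCk hSk).le
    · rw [N.edgeUtility_of_notMem hCk]
      exact hexit _ hSk
    · rw [N.edgeUtility_of_notMem hCk, N.edgeUtility_of_notMem hSk]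
  by_cases hCS : C ⊆ S
  · rcases (N.utility_le_utility hle).lt_or_eq with hlt | heq
    · exact Or.inl hlt
    · exact Or.inr ⟨heq, coopCount_mono hCS j⟩
  · obtain ⟨⟨k, j'⟩, hCk, hSk⟩ := Finset.not_subset.1 hCS
    obtain rfl : j' = j := by
      by_contra hne
      exact hSk ((hdev _ hne).2 hCk)
    exact Or.inl (N.utility_lt_utility hle (hC hCk) (hnew k hCk hSk))

/-- Take a maximal exit-deterred subset of `T`: any edge of `T` outside it is unattractive to
enter, for otherwise the subset could be enlarged. -/
lemma exists_deterred_subset (hc : N.IsCollateral c) (hentry : N.EntryDeterred c T) :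
    ∃ S ⊆ T, N.ExitDeterred c S ∧ N.EntryDeterred c S := by
  obtain ⟨S, -, hmax⟩ := (T.powerset.filter (N.ExitDeterred c)).exists_le_maximal
    (Finset.mem_filter.2 ⟨Finset.empty_mem_powerset T, fun _ he => absurd he (Finset.notMem_empty _)⟩)
  obtain ⟨hST, hexit⟩ : S ⊆ T ∧ N.ExitDeterred c S := by simpa using hmax.1
  refine ⟨S, hST, hexit, fun e he heS => ?_⟩
  have hmono : ∀ {U V : Finset (Fin n × Fin n)}, U ⊆ V →
      N.edgeUtility c (insert e U) e.1 e.2 ≤ N.edgeUtility c (insert e V) e.1 e.2 :=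
    fun hUV => N.edgeUtility_le_of_subset (hc _ _).1 (Finset.insert_subset_insert _ hUV)
      fun _ => Finset.mem_insert_self _ _
  by_cases heT : e ∈ T
  · by_contra! hge
    have hexit' : N.ExitDeterred c (insert e S) := by
      intro f hf
      rcases Finset.mem_insert.1 hf with rfl | hf
      · exact hge
      · exact (hexit f hf).trans (N.edgeUtility_le_of_subset (hc _ _).1
          (Finset.subset_insert _ _) fun _ => hf)
    have hle := hmax.2 (Finset.mem_filter.2 ⟨Finset.mem_powerset.2
      (Finset.insert_subset heT hST), hexit'⟩) (Finset.subset_insert e S)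
    exact heS (hle (Finset.mem_insert_self e S))
  · exact (hmono hST).trans_lt (hentry e he heT)

lemma Viable.eq_edges_of_entryDeterred (hv : N.Viable c) (hloop : N.Loopless)
    (hT : T ⊆ N.edges) (hentry : N.EntryDeterred c T) : T = N.edges := by
  obtain ⟨S, hST, hexit, hentryS⟩ := exists_deterred_subset hv.1 hentry
  have hS := hv.2.2 S (nashEq_of_deterred hv.1 hloop (hST.trans hT) hexit hentryS)
  exact hT.antisymm (hS ▸ hST)

lemma exitDeterred_edges (hprof : N.Profitable) (hc : N.IsCollateral c) :
    N.ExitDeterred c N.edges := by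
  rintro ⟨k, i⟩ he
  rw [N.edgeUtility_of_mem_investSet (by rwa [N.investSet_edges hprof]), N.investSet_edges hprof,
    N.raised_eq_sum_x fun _ h => h]
  exact N.le_payoffAt (hc k i).1 (N.le_retAt_sum_x hprof he)

lemma nashEq_edges (hprof : N.Profitable) (hc : N.IsCollateral c)
    (hloop : N.Loopless) : N.NashEq c N.edges :=
  nashEq_of_deterred hc hloop subset_rfl (exitDeterred_edges hprof hc) fun _ he he' => absurd he he'

end Equilibrium

section Star

variable {c : Fin n → Fin n → ℝ} {k : Fin n}

@[simp] lemma starSub_x (k j i : Fin n) : (N.starSub k).x j i = if j = k then N.x j i else 0 :=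
  rfl

@[simp] lemma starSub_Z (k j : Fin n) : (N.starSub k).Z j = if j = k then N.Z j else 0 :=
  rfl

@[simp] lemma starSub_α (k : Fin n) : (N.starSub k).α = N.α :=
  rfl

@[simp] lemma rowMatrix_apply (k j i : Fin n) : rowMatrix k c j i = if j = k then c j i else 0 :=
  rfl

lemma mem_edges_starSub {e : Fin n × Fin n} : e ∈ (N.starSub k).edges ↔ e ∈ N.edges ∧ e.1 = k := by
  by_cases h : e.1 = k <;> simp [mem_edges, h]

lemma edges_starSub_subset : (N.starSub k).edges ⊆ N.edges :=
  fun _ he => (N.mem_edges_starSub.1 he).1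

lemma profitable_starSub (hprof : N.Profitable) (k : Fin n) : (N.starSub k).Profitable := by
  rintro j ⟨i, hi⟩
  by_cases hj : j = k
  · subst hj
    simpa using hprof j ⟨i, by simpa using hi⟩
  · simp [hj] at hi

lemma isCollateral_rowMatrix (hc : N.IsCollateral c) (k : Fin n) :
    (N.starSub k).IsCollateral (rowMatrix k c) := fun j i => by
  by_cases hj : j = k
  · subst hj
    simpa using hc j i
  · simp [hj]

lemma raised_starSub (S : Finset (Fin n × Fin n)) : (N.starSub k).raised S k = N.raised S k := by
  simp [raised]

lemma payoffAt_starSub (i : Fin n) (r : ℝ) :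
    (N.starSub k).payoffAt (rowMatrix k c) k i r = N.payoffAt c k i r := by
  simp [payoffAt, retAt]

/-- In a star every investor has zero cost, so nobody defaults. -/
lemma investSet_starSub (hloop : N.Loopless) {S : Finset (Fin n × Fin n)}
    (hS : S ⊆ (N.starSub k).edges) : (N.starSub k).investSet S = S := by
  refine ((N.starSub k).investSet_subset S).antisymm
    ((N.starSub k).subset_investSet ⟨subset_rfl, fun e he => ?_⟩)
  obtain ⟨heN, rfl⟩ := N.mem_edges_starSub.1 (hS he)
  simpa [Ne.symm (hloop e heN)] using (N.starSub e.1).raised_nonneg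

lemma edgeUtility_starSub (hloop : N.Loopless) {S : Finset (Fin n × Fin n)}
    (hS : S ⊆ (N.starSub k).edges) {i : Fin n} (hi : (k, i) ∈ S) :
    (N.starSub k).edgeUtility (rowMatrix k c) S k i = N.payoffAt c k i (N.raised S k) := by
  rw [(N.starSub k).edgeUtility_of_mem_investSet (by rwa [N.investSet_starSub hloop hS]),
    N.investSet_starSub hloop hS, N.raised_starSub, N.payoffAt_starSub]

lemma edgeUtility_le_edgeUtility_starSub (hloop : N.Loopless)
    {D S : Finset (Fin n × Fin n)} (hS : S ⊆ (N.starSub k).edges)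
    (hDS : ∀ j, (k, j) ∈ D → (k, j) ∈ S) {i : Fin n} (hc : 0 ≤ c k i) (hi : (k, i) ∈ D) :
    N.edgeUtility c D k i ≤ (N.starSub k).edgeUtility (rowMatrix k c) S k i := by
  rw [N.edgeUtility_starSub hloop hS (hDS i hi)]
  exact (N.edgeUtility_le_payoffAt hc hi).trans
    (N.payoffAt_mono N.raised_nonneg (N.raised_le_raised hDS))

lemma edgeUtility_eq_edgeUtility_starSub (hloop : N.Loopless)
    {D S : Finset (Fin n × Fin n)} (hS : S ⊆ (N.starSub k).edges) (hD : D ⊆ N.edges)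
    (hDS : ∀ j, (k, j) ∈ D ↔ (k, j) ∈ S) (hsolv : ∀ j, (k, j) ∈ D → ¬ N.Defaults D j)
    {i : Fin n} (hi : (k, i) ∈ D) :
    N.edgeUtility c D k i = (N.starSub k).edgeUtility (rowMatrix k c) S k i := by
  have hinv : ∀ j, (k, j) ∈ N.investSet D ↔ (k, j) ∈ D := fun j =>
    ⟨fun h => N.investSet_subset D h,
      fun h => (N.mem_investSet_iff (hloop _ (hD h)) h).2 (hsolv j h)⟩
  rw [N.edgeUtility_starSub hloop hS ((hDS i).1 hi), N.edgeUtility_of_mem_investSet ((hinv i).2 hi),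
    N.raised_congr fun j => (hinv j).trans (hDS j)]

end Star

section Decomposition

variable {N} {c : Fin n → Fin n → ℝ}

lemma Loopless.starSub (hloop : N.Loopless) (k : Fin n) : (N.starSub k).Loopless :=
  fun e he => hloop e (N.edges_starSub_subset he)

/-- Complete a star equilibrium `S` by letting every other row cooperate: entering the star
pays no more in the network than in the star game, so the completed profile deters entry. -/
lemma Viable.starSub (hprof : N.Profitable) (hloop : N.Loopless)
    (hv : N.Viable c) (k : Fin n) : (N.starSub k).Viable (rowMatrix k c) := by
  have hck := N.isCollateral_rowMatrix hv.1 k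
  refine ⟨hck, (N.starSub k).nashEq_edges (N.profitable_starSub hprof k) hck
    (hloop.starSub k), fun S hS => hS.1.antisymm fun e he => ?_⟩
  set T := N.edges.filter (·.1 ≠ k) ∪ S
  have hT : T ⊆ N.edges :=
    Finset.union_subset (Finset.filter_subset _ _) (hS.1.trans N.edges_starSub_subset)
  have hentry : N.EntryDeterred c T := by
    rintro ⟨k', i⟩ he' heT
    obtain rfl : k' = k := by
      by_contra hk
      exact heT (Finset.mem_union_left _ (Finset.mem_filter.2 ⟨he', hk⟩))
    have hiS : (k', i) ∉ S := fun h => heT (Finset.mem_union_right _ h)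
    have hstar : (k', i) ∈ (N.starSub k').edges := N.mem_edges_starSub.2 ⟨he', rfl⟩
    calc N.edgeUtility c (insert (k', i) T) k' i
        ≤ (N.starSub k').edgeUtility (rowMatrix k' c) (insert (k', i) S) k' i :=
          N.edgeUtility_le_edgeUtility_starSub hloop (Finset.insert_subset hstar hS.1)
            (fun j hj => by simpa [T] using hj) (hv.1 k' i).1 (Finset.mem_insert_self _ _)
      _ < (N.starSub k').x k' i := hS.entryDeterred hck _ hstar hiS
      _ = N.x k' i := by simp
  have he' : e ∈ T := hv.eq_edges_of_entryDeterred hloop hT hentry ▸ N.edges_starSub_subset he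
  simpa [T, (N.mem_edges_starSub.1 he).2] using he'

/-- Investors with full rows stay solvent when one more edge into `k` cooperates, so the row of
`k` plays exactly as in the star game of `k`. -/
lemma NashEq.mem_of_investors_full (hprof : N.Profitable) (hloop : N.Loopless)
    (hc : N.IsCollateral c) {C : Finset (Fin n × Fin n)} (hC : N.NashEq c C) {k : Fin n}
    (hk : (N.starSub k).Viable (rowMatrix k c))
    (hinv : ∀ i, 0 < N.x k i → ∀ j, (i, j) ∈ N.edges → (i, j) ∈ C) :
    ∀ i, (k, i) ∈ N.edges → (k, i) ∈ C := by
  set Tk := C.filter (·.1 = k)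
  have hTk : Tk ⊆ (N.starSub k).edges := fun e he => by
    obtain ⟨heC, rfl⟩ := Finset.mem_filter.1 he
    exact N.mem_edges_starSub.2 ⟨hC.1 heC, rfl⟩
  have hentry : (N.starSub k).EntryDeterred (rowMatrix k c) Tk := by
    rintro ⟨k', i⟩ he heT
    obtain ⟨heN, rfl⟩ := N.mem_edges_starSub.1 he
    have hiC : (k', i) ∉ C := fun h => heT (Finset.mem_filter.2 ⟨h, rfl⟩)
    have hD : insert (k', i) C ⊆ N.edges := Finset.insert_subset heN hC.1
    have hsolv : ∀ j, (k', j) ∈ insert (k', i) C → ¬ N.Defaults (insert (k', i) C) j :=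
      fun j hj => N.not_defaults_of_edges_subset hprof fun l hl =>
        N.investSet_mono (Finset.subset_insert _ _)
          ((hC.investSet_eq hloop).symm ▸ hinv j (N.mem_edges.1 (hD hj)) l hl)
    rw [← N.edgeUtility_eq_edgeUtility_starSub hloop (Finset.insert_subset he hTk) hD
      (fun j => by simp [Tk]) hsolv (Finset.mem_insert_self _ _)]
    simpa using hC.entryDeterred hc _ heN hiC
  intro i hi
  have : (k, i) ∈ Tk :=
    hk.eq_edges_of_entryDeterred (hloop.starSub k) hTk hentry ▸
      N.mem_edges_starSub.2 ⟨hi, rfl⟩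
  exact (Finset.mem_filter.1 this).1

lemma Acyclic.loopless (h : N.Acyclic) : N.Loopless := fun e he hee =>
  h e.1 (.single (hee ▸ N.mem_edges.1 he))

lemma Acyclic.wellFounded (h : N.Acyclic) : WellFounded fun i k => 0 < N.x k i := by
  let R : Fin n → Fin n → Prop := fun i k => Relation.TransGen (fun a b => 0 < N.x a b) k i
  have : IsTrans (Fin n) R := ⟨fun _ _ _ hab hbc => hbc.trans hab⟩
  have : Std.Irrefl R := ⟨h⟩
  exact Subrelation.wf (fun hki => .single hki) (Finite.wellFounded_of_trans_of_irrefl R)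

lemma viable_of_viable_starSub (hprof : N.Profitable) (hacyc : N.Acyclic)
    (hc : N.IsCollateral c) (hrow : ∀ k, N.IsEnterprise k → (N.starSub k).Viable (rowMatrix k c)) :
    N.Viable c := by
  have hloop := hacyc.loopless
  refine ⟨hc, N.nashEq_edges hprof hc hloop, fun C hC => hC.1.antisymm ?_⟩
  have hfull : ∀ k i, (k, i) ∈ N.edges → (k, i) ∈ C := fun k =>
    hacyc.wellFounded.induction k fun k ih i hi =>
      hC.mem_of_investors_full hprof hloop hc (hrow k ⟨i, N.mem_edges.1 hi⟩) ih i hi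
  exact fun e he => hfull e.1 e.2 he

end Decomposition

lemma total_rowMatrix (k : Fin n) (c : Fin n → Fin n → ℝ) :
    total (rowMatrix k c) = ∑ i, c k i := by
  simp [total, rowMatrix]

lemma total_eq_sum_total_rowMatrix {c : Fin n → Fin n → ℝ} (hc : N.IsCollateral c) :
    total c = ∑ k ∈ Finset.univ.filter (fun k => N.IsEnterprise k), total (rowMatrix k c) := by
  simp only [total_rowMatrix]
  refine (Finset.sum_subset (Finset.filter_subset _ _) fun k _ hk => ?_).symm
  exact Finset.sum_eq_zero fun i _ =>
    (hc k i).2 (N.x_eq_zero_of_not_isEnterprise (fun h => hk (by simpa using h)) i)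

end InvestmentNetwork

/-- **Optimal collaterals in DAGs (Theorem 9).**  If the investment graph is
acyclic and the collateral matrix `c` restricts, on the star of every
enterprise vertex `k`, to an optimal solution of the single-enterprise
collateral minimization problem induced on that star, then `c` is an optimal
solution of the collateral minimization problem of the whole network (in
particular it is viable), and its total collateral is the sum of the optimal
totals over the star decomposition — i.e. `C_G = ∑_{H_i ∈ ℋ(G)} C_{H_i}` and
`NEC(P_G) = 1`. -/
theorem dag_optimal_collaterals {n : ℕ} (N : InvestmentNetwork n)
    (hprof : N.Profitable) (hacyc : N.Acyclic)
    (c : Fin n → Fin n → ℝ) (hcol : N.IsCollateral c)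
    (hrow : ∀ k : Fin n, N.IsEnterprise k →
      (N.starSub k).Optimal (InvestmentNetwork.rowMatrix k c)) :
    N.Optimal c ∧
      InvestmentNetwork.total c =
        ∑ k ∈ Finset.univ.filter (fun k => N.IsEnterprise k),
          InvestmentNetwork.total (InvestmentNetwork.rowMatrix k c) := by
  refine ⟨⟨N.viable_of_viable_starSub hprof hacyc hcol fun k hk => (hrow k hk).1,
    fun c' hc' => ?_⟩, N.total_eq_sum_total_rowMatrix hcol⟩
  rw [N.total_eq_sum_total_rowMatrix hcol, N.total_eq_sum_total_rowMatrix hc'.1]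
  exact Finset.sum_le_sum fun k hk =>
    (hrow k (Finset.mem_filter.1 hk).2).2 _ (hc'.starSub hprof hacyc.loopless k)
end
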